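/- For nonnegative reals a ≠ b and a positive integer m, ∑_{k=1}^{m} ψ₀(k+a)/(k+b) + ∑_{k=1}^{m} ψ₀(k+b)/(k+a) = ψ₀(a+m+1)ψ₀(b+m+1) − ψ₀(a+1)ψ₀(b+1) + (1/(a−b))·(ψ₀(a+m+1) − ψ₀(b+m+1) − ψ₀(a+1) + ψ₀(b+1)). -/

import Mathlib

open Finset Real

/-- The digamma function ψ₀(x) = d/dx ln Γ(x). -/
noncomputable def digamma (x : ℝ) : ℝ := deriv (fun y => Real.log (Real.Gamma y)) x

lemma digamma_add_one (x : ℝ) (hx : 0 < x) : digamma (x + 1) = digamma x + 1 / x := by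
  have h1 : digamma (x + 1) = deriv (fun y => Real.log (Real.Gamma (y + 1))) x := by
    rw [digamma, ← deriv_comp_add_const]
  have hev : (fun y => Real.log (Real.Gamma (y + 1)))
      =ᶠ[nhds x] fun y => Real.log y + Real.log (Real.Gamma y) := by
    filter_upwards [eventually_gt_nhds hx] with y hy
    rw [Real.Gamma_add_one hy.ne', Real.log_mul hy.ne' (Real.Gamma_pos_of_pos hy).ne']
  have hG : DifferentiableAt ℝ (fun y => Real.log (Real.Gamma y)) x := by
    refine (Real.differentiableAt_Gamma ?_).log (Real.Gamma_pos_of_pos hx).ne'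
    intro m
    have : (0:ℝ) ≤ m := m.cast_nonneg
    intro h; rw [h] at hx; linarith
  rw [h1, hev.deriv_eq, deriv_fun_add (Real.differentiableAt_log hx.ne') hG,
    Real.deriv_log, digamma, add_comm, one_div]

theorem sum_digamma_div_pair (a b : ℝ) (ha : 0 ≤ a) (hb : 0 ≤ b) (hab : a ≠ b)
    (m : ℕ) (hm : 1 ≤ m) :
    ∑ k ∈ Finset.Icc 1 m, digamma (k + a) / (k + b) +
      ∑ k ∈ Finset.Icc 1 m, digamma (k + b) / (k + a) =
      digamma (a + m + 1) * digamma (b + m + 1) - digamma (a + 1) * digamma (b + 1) +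
        (1 / (a - b)) * (digamma (a + m + 1) - digamma (b + m + 1)
          - digamma (a + 1) + digamma (b + 1)) := by
  clear hm
  induction m with
  | zero => simp
  | succ n ih =>
    rw [Finset.sum_Icc_succ_top (Nat.one_le_iff_ne_zero.mpr n.succ_ne_zero),
        Finset.sum_Icc_succ_top (Nat.one_le_iff_ne_zero.mpr n.succ_ne_zero)]
    have hA : digamma (a + (n + 1 : ℕ) + 1) = digamma (a + n + 1) + 1 / (a + n + 1) := by
      have := digamma_add_one (a + n + 1) (by positivity)
      push_cast
      convert this using 2 <;> ring
    have hB : digamma (b + (n + 1 : ℕ) + 1) = digamma (b + n + 1) + 1 / (b + n + 1) := by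
      have := digamma_add_one (b + n + 1) (by positivity)
      push_cast
      convert this using 2 <;> ring
    have hA' : digamma ((n + 1 : ℕ) + a) = digamma (a + n + 1) := by push_cast; ring_nf
    have hB' : digamma ((n + 1 : ℕ) + b) = digamma (b + n + 1) := by push_cast; ring_nf
    rw [hA, hB, hA', hB']
    have hab' : a - b ≠ 0 := sub_ne_zero.mpr hab
    have h1 : (0:ℝ) < a + n + 1 := by positivity
    have h2 : (0:ℝ) < b + n + 1 := by positivity
    have e1 : ((n + 1 : ℕ) : ℝ) + b = b + n + 1 := by push_cast; ring
    have e2 : ((n + 1 : ℕ) : ℝ) + a = a + n + 1 := by push_cast; ring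
    rw [e1, e2]
    have key : ∀ A B A1 B1 p q : ℝ, p ≠ 0 → q ≠ 0 → q - p = b - a →
        A / q + B / p =
          (A + 1/p) * (B + 1/q) - A1 * B1
            + (1/(a-b)) * ((A + 1/p) - (B + 1/q) - A1 + B1)
          - (A * B - A1 * B1 + (1/(a-b)) * (A - B - A1 + B1)) := by
      intro A B A1 B1 p q hp hq hpq
      have hq' : q = p + (b - a) := by linarith
      subst hq'
      field_simp
      ring
    have hk := key (digamma (a + n + 1)) (digamma (b + n + 1)) (digamma (a + 1))
      (digamma (b + 1)) (a + n + 1) (b + n + 1) h1.ne' h2.ne' (by ring)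
    linear_combination ih + hk
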